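/- Let M be a k-class model over a finite feature set X, let e be an entity, and let x ∈ X. Then x belongs to every sufficient reason for M(e) if and only if X \ {x} is not a reason for M(e). -/

import Mathlib

/-- `S` is a reason for the prediction `M e`: every entity agreeing with `e` on `S`
gets the same prediction. -/
def IsReason {X : Type*} {D : X → Type*} {C : Type*}
    (M : (∀ x, D x) → C) (e : ∀ x, D x) (S : Set X) : Prop :=
  ∀ e' : ∀ x, D x, (∀ x ∈ S, e' x = e x) → M e' = M e

/-- `S` is a sufficient reason: a reason that is minimal with respect to being a reason. -/
def IsSufficientReason {X : Type*} {D : X → Type*} {C : Type*}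
    (M : (∀ x, D x) → C) (e : ∀ x, D x) (S : Set X) : Prop :=
  IsReason M e S ∧ ∀ S' ⊂ S, ¬ IsReason M e S'

/-!
Reasons are upward closed, so `x` lies outside some sufficient reason exactly when some reason
avoids `x`, i.e. when the largest set avoiding `x`, namely `X \ {x}`, is a reason. Over a finite
feature set every reason contains a minimal one, which is a sufficient reason.
-/

section

variable {X : Type*} {D : X → Type*} {C : Type*} {M : (∀ x, D x) → C} {e : ∀ x, D x}

theorem IsReason.mono {S T : Set X} (hST : S ⊆ T) (hS : IsReason M e S) : IsReason M e T :=
  fun e' he' => hS e' fun y hy => he' y (hST hy)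

theorem isSufficientReason_iff_minimal {S : Set X} :
    IsSufficientReason M e S ↔ Minimal (IsReason M e) S :=
  minimal_iff_forall_lt.symm

theorem IsReason.exists_isSufficientReason_subset [Finite X] {S : Set X} (hS : IsReason M e S) :
    ∃ T ⊆ S, IsSufficientReason M e T := by
  obtain ⟨T, hTS, hT⟩ := exists_minimal_le_of_wellFoundedLT (IsReason M e) S hS
  exact ⟨T, hTS, isSufficientReason_iff_minimal.mpr hT⟩

end

theorem mem_all_sufficientReasons_iff_compl_not_reason_general
    {X : Type*} [Finite X] {D : X → Type*}
    {C : Type*}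
    (M : (∀ x, D x) → C) (e : ∀ x, D x) (x : X) :
    (∀ S : Set X, IsSufficientReason M e S → x ∈ S) ↔
      ¬ IsReason M e (Set.univ \ {x}) := by
  constructor
  · intro hall hcompl
    obtain ⟨S, hS, hSuff⟩ := hcompl.exists_isSufficientReason_subset
    exact (hS (hall S hSuff)).2 rfl
  · intro hcompl S hS
    by_contra hx
    exact hcompl (hS.1.mono (Set.subset_sdiff_singleton (Set.subset_univ S) hx))

/-- `x` belongs to every sufficient reason for `M e` iff `X \ {x}` is not a reason
for `M e`. -/
theorem mem_all_sufficientReasons_iff_compl_not_reason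
    {X : Type*} [Finite X] {D : X → Type*} [∀ x, Nonempty (D x)]
    {C : Type*} [Finite C]
    (M : (∀ x, D x) → C) (e : ∀ x, D x) (x : X) :
    (∀ S : Set X, IsSufficientReason M e S → x ∈ S) ↔
      ¬ IsReason M e (Set.univ \ {x}) :=
  mem_all_sufficientReasons_iff_compl_not_reason_general M e x
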